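/- arXiv:1609.01323 — 5 statements merged into one kernel-verified Lean document; each statement's English description precedes it below -/
import Mathlib

section
/- If a graph G cellularly embedded in the torus, with r vertices and 2r edges, has the Angle property (there exist positive angle weights at the corners of faces summing to 1 around each vertex and summing to 1 around each face), then for every nonempty proper subset J of the faces, the number of interior vertices of G(J) is strictly less than |J|, which is strictly less than the number of vertices of G(J). -/
/-!
Let the angle `ω` at a corner be the share of its face's unit of angle given to its vertex.
Summing the angles of the faces in `J` over the vertices of `G(J)` counts `|J|`, since each face of
`J` has all its corners there. A vertex receives at most its total angle `1`, and an interior vertex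
exactly `1`. By connectedness some vertex of `G(J)` also lies on a face outside `J`; it receives an
amount strictly between `0` and `1`, which makes both comparisons with `|Int G(J)|` and
`|V(G(J))|` strict.
-/

/-- A combinatorial model of a connected loopless multigraph, cellularly embedded in the
torus, with `r` vertices, `2r` edges and `r` faces.  The embedding is recorded through
its facial walks: face `f` has a closed boundary walk of length `len f`, whose `i`-th
vertex is `wv f i` and `i`-th edge is `we f i` (indices taken cyclically), the edge
`we f i` joining `wv f i` to `wv f (i+1)`.  Every edge is traversed exactly twice in
total by the facial walks. -/
structure TorusGraph (r : ℕ) (V E F : Type) [Fintype V] [Fintype E] [Fintype F]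
    [DecidableEq V] [DecidableEq E] [DecidableEq F] where
  ends : E → Sym2 V
  len : F → ℕ
  len_pos : ∀ f, 0 < len f
  wv : F → ℕ → V
  we : F → ℕ → E
  wv_periodic : ∀ f i, wv f (i + len f) = wv f i
  we_periodic : ∀ f i, we f (i + len f) = we f i
  walk_ends : ∀ f i, ends (we f i) = s(wv f i, wv f (i + 1))
  loopless : ∀ e, ¬ (ends e).IsDiag
  card_V : Fintype.card V = r
  card_E : Fintype.card E = 2 * r
  card_F : Fintype.card F = r
  edge_twice : ∀ e : E,
    ∑ f : F, ((Finset.range (len f)).filter (fun i => we f i = e)).card = 2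
  connected : (SimpleGraph.fromRel (fun u v => ∃ e, ends e = s(u, v))).Connected

namespace TorusGraph

variable {r : ℕ} {V E F : Type} [Fintype V] [Fintype E] [Fintype F]
    [DecidableEq V] [DecidableEq E] [DecidableEq F]

/-- The set of vertices on the boundary of face `f`. -/
def faceVerts (G : TorusGraph r V E F) (f : F) : Finset V :=
  (Finset.range (G.len f)).image (G.wv f)

/-- `V(G(J))`: the vertices of the subgraph generated by the faces in `J`. -/
def VJ (G : TorusGraph r V E F) (J : Finset F) : Finset V :=
  J.biUnion G.faceVerts

/-- `Int G(J)`: vertices incident only with faces labelled by `J`. -/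
def IntJ (G : TorusGraph r V E F) (J : Finset F) : Finset V :=
  (G.VJ J).filter (fun v => ∀ f : F, v ∈ G.faceVerts f → f ∈ J)

/-- The **Angle property**: there are positive weights on the corners
(positions of the facial walks) summing to `1` within each face and to `1`
around each vertex. -/
def AngleProp (G : TorusGraph r V E F) : Prop :=
  ∃ ω : F → ℕ → ℝ,
    (∀ f, ∀ i ∈ Finset.range (G.len f), 0 < ω f i) ∧
    (∀ f, ∑ i ∈ Finset.range (G.len f), ω f i = 1) ∧
    (∀ v : V, ∑ f : F,
        ∑ i ∈ (Finset.range (G.len f)).filter (fun i => G.wv f i = v), ω f i = 1)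

/-- The **Euler property**: every facial walk traverses each boundary edge
exactly once (it is an Euler trail of the boundary subgraph). -/
def EulerProp (G : TorusGraph r V E F) : Prop :=
  ∀ f, ∀ i < G.len f, ∀ j < G.len f, G.we f i = G.we f j → i = j

lemma wv_mem_faceVerts (G : TorusGraph r V E F) (f : F) {i : ℕ} (hi : i < G.len f) :
    G.wv f i ∈ G.faceVerts f :=
  Finset.mem_image_of_mem _ (Finset.mem_range.2 hi)

lemma wv_succ_mem_faceVerts (G : TorusGraph r V E F) (f : F) {i : ℕ} (hi : i < G.len f) :
    G.wv f (i + 1) ∈ G.faceVerts f := by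
  rcases (show i + 1 ≤ G.len f from hi).lt_or_eq with h | h
  · exact G.wv_mem_faceVerts f h
  · have hwrap : G.wv f (i + 1) = G.wv f 0 := by
      rw [h]; simpa using G.wv_periodic f 0
    exact hwrap ▸ G.wv_mem_faceVerts f (G.len_pos f)

lemma exists_we_eq (G : TorusGraph r V E F) (e : E) : ∃ f, ∃ i < G.len f, G.we f i = e := by
  by_contra! h
  have hempty : ∀ f, (Finset.range (G.len f)).filter (fun i => G.we f i = e) = ∅ := fun f =>
    Finset.filter_eq_empty_iff.2 fun i hi => h f i (Finset.mem_range.1 hi)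
  simpa [hempty] using G.edge_twice e

lemma exists_faceVerts_of_adj (G : TorusGraph r V E F) {u v : V}
    (huv : (SimpleGraph.fromRel (fun u v => ∃ e, G.ends e = s(u, v))).Adj u v) :
    ∃ f, u ∈ G.faceVerts f ∧ v ∈ G.faceVerts f := by
  obtain ⟨e, he⟩ : ∃ e, G.ends e = s(u, v) := by
    rcases huv.2 with ⟨e, he⟩ | ⟨e, he⟩
    · exact ⟨e, he⟩
    · exact ⟨e, he.trans Sym2.eq_swap⟩
  obtain ⟨f, i, hi, rfl⟩ := G.exists_we_eq e
  rw [G.walk_ends] at he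
  have hi₀ := G.wv_mem_faceVerts f hi
  have hi₁ := G.wv_succ_mem_faceVerts f hi
  rcases Sym2.eq_iff.1 he with ⟨rfl, rfl⟩ | ⟨rfl, rfl⟩
  exacts [⟨f, hi₀, hi₁⟩, ⟨f, hi₁, hi₀⟩]

lemma exists_mem_VJ_exists_notMem_mem_faceVerts (G : TorusGraph r V E F) {J : Finset F}
    (hJ : J.Nonempty) (hJne : J ≠ Finset.univ) :
    ∃ v ∈ G.VJ J, ∃ f ∉ J, v ∈ G.faceVerts f := by
  obtain ⟨f₁, hf₁⟩ := hJ
  obtain ⟨f₂, hf₂⟩ := not_forall.1 (Finset.eq_univ_iff_forall.not.1 hJne)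
  have hu : G.wv f₁ 0 ∈ G.VJ J :=
    Finset.mem_biUnion.2 ⟨f₁, hf₁, G.wv_mem_faceVerts f₁ (G.len_pos f₁)⟩
  have hv : G.wv f₂ 0 ∈ G.faceVerts f₂ := G.wv_mem_faceVerts f₂ (G.len_pos f₂)
  by_cases hvJ : G.wv f₂ 0 ∈ G.VJ J
  · exact ⟨_, hvJ, f₂, hf₂, hv⟩
  -- otherwise a walk from `G(J)` to the vertex `wv f₂ 0` outside it leaves `G(J)` along an edge
  obtain ⟨d, -, hd₁, hd₂⟩ := ((G.connected.preconnected _ _).some).exists_boundary_dart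
    (G.VJ J : Set V) hu hvJ
  obtain ⟨f, hdf₁, hdf₂⟩ := G.exists_faceVerts_of_adj d.adj
  exact ⟨d.fst, hd₁, f, fun hf => hd₂ (Finset.mem_biUnion.2 ⟨f, hf, hdf₂⟩), hdf₁⟩

def faceAngle (G : TorusGraph r V E F) (ω : F → ℕ → ℝ) (f : F) (v : V) : ℝ :=
  ∑ i ∈ (Finset.range (G.len f)).filter (fun i => G.wv f i = v), ω f i

lemma faceAngle_eq_zero (G : TorusGraph r V E F) (ω : F → ℕ → ℝ) {f : F} {v : V}
    (hv : v ∉ G.faceVerts f) : G.faceAngle ω f v = 0 :=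
  Finset.sum_eq_zero fun i hi =>
    absurd (Finset.mem_image.2 ⟨i, (Finset.mem_filter.1 hi).1, (Finset.mem_filter.1 hi).2⟩) hv

structure IsAngleWeighting (G : TorusGraph r V E F) (ω : F → ℕ → ℝ) : Prop where
  pos : ∀ f, ∀ i ∈ Finset.range (G.len f), 0 < ω f i
  face_sum : ∀ f, ∑ i ∈ Finset.range (G.len f), ω f i = 1
  vertex_sum : ∀ v, ∑ f, G.faceAngle ω f v = 1

namespace IsAngleWeighting

variable {G : TorusGraph r V E F} {ω : F → ℕ → ℝ}

lemma faceAngle_nonneg (hω : G.IsAngleWeighting ω) (f : F) (v : V) : 0 ≤ G.faceAngle ω f v :=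
  Finset.sum_nonneg fun i hi => (hω.pos f i (Finset.mem_filter.1 hi).1).le

lemma faceAngle_pos (hω : G.IsAngleWeighting ω) {f : F} {v : V} (hv : v ∈ G.faceVerts f) :
    0 < G.faceAngle ω f v := by
  obtain ⟨i, hi, rfl⟩ := Finset.mem_image.1 hv
  exact Finset.sum_pos' (fun j hj => (hω.pos f j (Finset.mem_filter.1 hj).1).le)
    ⟨i, Finset.mem_filter.2 ⟨hi, rfl⟩, hω.pos f i hi⟩

lemma sum_faceAngle_of_faceVerts_subset (hω : G.IsAngleWeighting ω) {f : F} {N : Finset V}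
    (hN : G.faceVerts f ⊆ N) : ∑ v ∈ N, G.faceAngle ω f v = 1 :=
  (Finset.sum_fiberwise_of_maps_to (fun _ hi => hN (Finset.mem_image_of_mem _ hi)) _).trans
    (hω.face_sum f)

lemma sum_VJ_sum_faceAngle (hω : G.IsAngleWeighting ω) (J : Finset F) :
    ∑ v ∈ G.VJ J, ∑ f ∈ J, G.faceAngle ω f v = J.card := by
  rw [Finset.sum_comm, Finset.card_eq_sum_ones, Nat.cast_sum, Nat.cast_one]
  exact Finset.sum_congr rfl fun f hf =>
    hω.sum_faceAngle_of_faceVerts_subset (Finset.subset_biUnion_of_mem G.faceVerts hf)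

lemma sum_faceAngle_le_one (hω : G.IsAngleWeighting ω) (J : Finset F) (v : V) :
    ∑ f ∈ J, G.faceAngle ω f v ≤ 1 :=
  hω.vertex_sum v ▸ Finset.sum_le_sum_of_subset_of_nonneg (Finset.subset_univ J)
    fun f _ _ => hω.faceAngle_nonneg f v

lemma sum_faceAngle_eq_one_of_mem_IntJ (hω : G.IsAngleWeighting ω) {J : Finset F} {v : V}
    (hv : v ∈ G.IntJ J) : ∑ f ∈ J, G.faceAngle ω f v = 1 :=
  hω.vertex_sum v ▸ Finset.sum_subset (Finset.subset_univ J) fun f _ hf =>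
    G.faceAngle_eq_zero ω fun hvf => hf ((Finset.mem_filter.1 hv).2 f hvf)

lemma sum_faceAngle_pos_of_mem_VJ (hω : G.IsAngleWeighting ω) {J : Finset F} {v : V}
    (hv : v ∈ G.VJ J) : 0 < ∑ f ∈ J, G.faceAngle ω f v := by
  obtain ⟨f, hf, hvf⟩ := Finset.mem_biUnion.1 hv
  exact Finset.sum_pos' (fun f _ => hω.faceAngle_nonneg f v) ⟨f, hf, hω.faceAngle_pos hvf⟩

lemma sum_faceAngle_lt_one (hω : G.IsAngleWeighting ω) {J : Finset F} {v : V} {f : F}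
    (hf : f ∉ J) (hvf : v ∈ G.faceVerts f) : ∑ f ∈ J, G.faceAngle ω f v < 1 :=
  hω.vertex_sum v ▸ Finset.sum_lt_sum_of_subset (Finset.subset_univ J)
    (Finset.mem_univ f) hf (hω.faceAngle_pos hvf) fun f _ _ => hω.faceAngle_nonneg f v

end IsAngleWeighting

end TorusGraph

open TorusGraph in
/-- If a cellularly embedded toroidal graph with `r` vertices and `2r` edges has the
Angle property, then for every nonempty proper subset `J` of faces,
`|Int G(J)| < |J| < |V(G(J))|`. -/
theorem angle_implies_hall {r : ℕ} {V E F : Type} [Fintype V] [Fintype E] [Fintype F]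
    [DecidableEq V] [DecidableEq E] [DecidableEq F]
    (G : TorusGraph r V E F) (hA : G.AngleProp) :
    ∀ J : Finset F, J.Nonempty → J ≠ Finset.univ →
      (G.IntJ J).card < J.card ∧ J.card < (G.VJ J).card := by
  obtain ⟨ω, hpos, hface, hvert⟩ := hA
  have hω : G.IsAngleWeighting ω := ⟨hpos, hface, hvert⟩
  intro J hJ hJne
  obtain ⟨v₀, hv₀, f₀, hf₀, hv₀f₀⟩ :=
    G.exists_mem_VJ_exists_notMem_mem_faceVerts hJ hJne
  have hv₀_ext : v₀ ∉ G.IntJ J := fun h => hf₀ ((Finset.mem_filter.1 h).2 f₀ hv₀f₀)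
  constructor <;> rw [← Nat.cast_lt (α := ℝ)]
  · calc ((G.IntJ J).card : ℝ) = ∑ v ∈ G.IntJ J, ∑ f ∈ J, G.faceAngle ω f v := by
          rw [Finset.sum_congr rfl fun v hv => hω.sum_faceAngle_eq_one_of_mem_IntJ hv]
          simp
      _ < ∑ v ∈ G.VJ J, ∑ f ∈ J, G.faceAngle ω f v :=
          Finset.sum_lt_sum_of_subset (Finset.filter_subset _ _) hv₀ hv₀_ext
            (hω.sum_faceAngle_pos_of_mem_VJ hv₀)
            fun v _ _ => Finset.sum_nonneg fun f _ => hω.faceAngle_nonneg f v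
      _ = J.card := hω.sum_VJ_sum_faceAngle J
  · calc (J.card : ℝ) = ∑ v ∈ G.VJ J, ∑ f ∈ J, G.faceAngle ω f v :=
          (hω.sum_VJ_sum_faceAngle J).symm
      _ < ∑ v ∈ G.VJ J, 1 :=
          Finset.sum_lt_sum (fun v _ => hω.sum_faceAngle_le_one J v)
            ⟨v₀, hv₀, hω.sum_faceAngle_lt_one hf₀ hv₀f₀⟩
      _ = (G.VJ J).card := by simp
end

section
/- Let G be a connected cellularly embedded toroidal graph with r vertices and r faces such that for every nonempty proper subset J of faces, |J| < |V(G(J))|. Then for any vertex v₀ and any face F₀ incident with v₀, the assignment v₀ ↦ F₀ extends to a bijection T from the vertex set of G to the face set of G such that each vertex v is incident with the face T(v). -/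
section PinnedHall

variable {ι α : Type*} [DecidableEq ι] [DecidableEq α]

def pinnedFamily (t : ι → Finset α) (i₀ : ι) (a₀ : α) : ι → Finset α :=
  Function.update (fun i => (t i).erase a₀) i₀ {a₀}

theorem biUnion_pinnedFamily_of_notMem (t : ι → Finset α) {i₀ : ι} (a₀ : α) {s : Finset ι}
    (hs : i₀ ∉ s) : s.biUnion (pinnedFamily t i₀ a₀) = (s.biUnion t).erase a₀ := by
  rw [Finset.erase_biUnion]
  refine Finset.biUnion_congr rfl fun i hi => ?_
  rw [pinnedFamily, Function.update_of_ne (ne_of_mem_of_not_mem hi hs)]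

theorem biUnion_pinnedFamily_of_mem (t : ι → Finset α) {i₀ : ι} (a₀ : α) {s : Finset ι}
    (hs : i₀ ∈ s) :
    s.biUnion (pinnedFamily t i₀ a₀) = insert a₀ (((s.erase i₀).biUnion t).erase a₀) := by
  conv_lhs => rw [← Finset.insert_erase hs]
  rw [Finset.biUnion_insert, biUnion_pinnedFamily_of_notMem t a₀ (Finset.notMem_erase i₀ s),
    pinnedFamily, Function.update_self, Finset.insert_eq]

variable [Fintype ι]

theorem card_le_card_biUnion_pinnedFamily (t : ι → Finset α)
    (ht : ∀ s : Finset ι, s.Nonempty → s ≠ Finset.univ → s.card < (s.biUnion t).card)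
    (i₀ : ι) (a₀ : α) (s : Finset ι) : s.card ≤ (s.biUnion (pinnedFamily t i₀ a₀)).card := by
  have surplus : ∀ s : Finset ι, i₀ ∉ s → s.card ≤ ((s.biUnion t).erase a₀).card := by
    intro s hs
    rcases s.eq_empty_or_nonempty with rfl | hne
    · simp
    have hlt := ht s hne fun h => hs (h ▸ Finset.mem_univ i₀)
    have := Finset.pred_card_le_card_erase (s := s.biUnion t) (a := a₀)
    omega
  by_cases hs : i₀ ∈ s
  · rw [biUnion_pinnedFamily_of_mem t a₀ hs,
      Finset.card_insert_of_notMem (Finset.notMem_erase _ _),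
      ← Finset.card_erase_add_one hs]
    exact Nat.succ_le_succ (surplus _ (Finset.notMem_erase i₀ s))
  · rw [biUnion_pinnedFamily_of_notMem t a₀ hs]
    exact surplus s hs

theorem exists_injective_mem_apply_eq_of_card_lt_card_biUnion (t : ι → Finset α)
    (ht : ∀ s : Finset ι, s.Nonempty → s ≠ Finset.univ → s.card < (s.biUnion t).card)
    {i₀ : ι} {a₀ : α} (h₀ : a₀ ∈ t i₀) :
    ∃ g : ι → α, Function.Injective g ∧ (∀ i, g i ∈ t i) ∧ g i₀ = a₀ := by
  obtain ⟨g, hg, hgt⟩ := (Finset.all_card_le_biUnion_card_iff_exists_injective _).mp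
    (card_le_card_biUnion_pinnedFamily t ht i₀ a₀)
  have hg₀ : g i₀ = a₀ := by simpa [pinnedFamily] using hgt i₀
  refine ⟨g, hg, fun i => ?_, hg₀⟩
  by_cases hi : i = i₀
  · subst hi
    exact hg₀ ▸ h₀
  · have := hgt i
    rw [pinnedFamily, Function.update_of_ne hi] at this
    exact Finset.mem_of_mem_erase this

end PinnedHall

open TorusGraph in
/-- If for every nonempty proper subset `J` of faces `|J| < |V(G(J))|`, then any
assignment of a vertex `v₀` to an incident face `f₀` extends to a bijection `T`
from vertices to faces with every vertex `v` incident with `T v`. -/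
theorem hall_transversal {r : ℕ} {V E F : Type} [Fintype V] [Fintype E] [Fintype F]
    [DecidableEq V] [DecidableEq E] [DecidableEq F]
    (G : TorusGraph r V E F)
    (hH : ∀ J : Finset F, J.Nonempty → J ≠ Finset.univ → J.card < (G.VJ J).card)
    (v₀ : V) (f₀ : F) (h₀ : v₀ ∈ G.faceVerts f₀) :
    ∃ T : V ≃ F, T v₀ = f₀ ∧ ∀ v : V, v ∈ G.faceVerts (T v) := by
  obtain ⟨g, hg, hgt, hg₀⟩ := exists_injective_mem_apply_eq_of_card_lt_card_biUnion _ hH h₀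
  have hcard : Fintype.card F = Fintype.card V := by rw [G.card_F, G.card_V]
  let e : F ≃ V :=
    Equiv.ofBijective g ((Fintype.bijective_iff_injective_and_card g).mpr ⟨hg, hcard⟩)
  refine ⟨e.symm, e.symm_apply_eq.mpr hg₀.symm, fun v => ?_⟩
  simpa only [show g (e.symm v) = v from e.apply_symm_apply v] using hgt (e.symm v)
end

section
/- A connected cellularly embedded toroidal multigraph G with r vertices, 2r edges and r faces has the Angle property if and only if the Hall condition |J| < |V(G(J))| holds for every nonempty proper subset J of the set of faces. -/
/-!
If `ω` is an angle assignment and `J` a nonempty proper set of faces, the angles of the faces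
in `J` add up to `|J|` and all sit at vertices of `G(J)`, whose angles add up to `|V(G(J))|`.
By connectivity some face outside `J` has a corner at a vertex of `G(J)`, and its positive
angle makes the inequality strict.

Conversely, since `|F| = |V|`, the strict Hall condition leaves one vertex to spare, so any
face can be matched to any of its vertices and this extends (Hall's theorem) to a perfect
matching `σ` of faces to vertices. Spreading the angle `1` of each face `f` evenly over its
corners at `σ f` gives a nonnegative solution of the angle equations, and averaging one such
solution for every corner gives a positive one.
-/

namespace TorusGraph

variable {r : ℕ} {V E F : Type} [Fintype V] [Fintype E] [Fintype F]
    [DecidableEq V] [DecidableEq E] [DecidableEq F] (G : TorusGraph r V E F)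

open Finset

def HallCondition : Prop :=
  ∀ J : Finset F, J.Nonempty → J ≠ univ → #J < #(G.VJ J)

def angleAt (ω : F → ℕ → ℝ) (f : F) (v : V) : ℝ :=
  ∑ i ∈ (range (G.len f)).filter (fun i => G.wv f i = v), ω f i

def IsAngleWeighting_s7 (ω : F → ℕ → ℝ) : Prop :=
  (∀ f, ∑ i ∈ range (G.len f), ω f i = 1) ∧ ∀ v, ∑ f, G.angleAt ω f v = 1

lemma wv_mem_faceVerts_s7 (f : F) (i : ℕ) : G.wv f i ∈ G.faceVerts f := by
  have hper : Function.Periodic (G.wv f) (G.len f) := G.wv_periodic f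
  rw [← hper.map_mod_nat i]
  exact mem_image_of_mem _ (mem_range.2 (Nat.mod_lt _ (G.len_pos f)))

lemma nonempty_faces (G : TorusGraph r V E F) : Nonempty F := by
  have : Nonempty V := G.connected.nonempty
  rw [← Fintype.card_pos_iff, G.card_F, ← G.card_V]
  exact Fintype.card_pos

lemma exists_corner_of_edge (e : E) : ∃ f, ∃ i < G.len f, G.we f i = e := by
  by_contra! h
  have hzero : ∑ f : F, #((range (G.len f)).filter fun i => G.we f i = e) = 0 :=
    sum_eq_zero fun f _ =>
      card_eq_zero.2 (filter_eq_empty_iff.2 fun i hi => h f i (mem_range.1 hi))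
  simp [G.edge_twice e] at hzero

lemma exists_face_mem_of_ends {u v : V} {e : E} (h : G.ends e = s(u, v)) :
    ∃ f, u ∈ G.faceVerts f ∧ v ∈ G.faceVerts f := by
  obtain ⟨f, i, -, rfl⟩ := G.exists_corner_of_edge e
  rw [G.walk_ends, Sym2.eq_iff] at h
  rcases h with ⟨rfl, rfl⟩ | ⟨rfl, rfl⟩
  · exact ⟨f, G.wv_mem_faceVerts_s7 f i, G.wv_mem_faceVerts_s7 f _⟩
  · exact ⟨f, G.wv_mem_faceVerts_s7 f _, G.wv_mem_faceVerts_s7 f i⟩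

lemma exists_face_mem_of_adj {u v : V}
    (h : (SimpleGraph.fromRel fun u v => ∃ e, G.ends e = s(u, v)).Adj u v) :
    ∃ f, u ∈ G.faceVerts f ∧ v ∈ G.faceVerts f := by
  obtain ⟨-, ⟨e, he⟩ | ⟨e, he⟩⟩ := h
  · exact G.exists_face_mem_of_ends he
  · exact (G.exists_face_mem_of_ends he).imp fun _ => And.symm

lemma exists_face_notMem_meeting_VJ {J : Finset F} (hne : J.Nonempty) (hJ : J ≠ univ) :
    ∃ f ∉ J, ∃ v ∈ G.faceVerts f, v ∈ G.VJ J := by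
  obtain ⟨f₀, hf₀⟩ := hne
  obtain ⟨f₁, hf₁⟩ : ∃ f, f ∉ J := by simpa [eq_univ_iff_forall] using hJ
  by_cases hw : G.wv f₁ 0 ∈ G.VJ J
  · exact ⟨f₁, hf₁, _, G.wv_mem_faceVerts_s7 f₁ 0, hw⟩
  have hu : G.wv f₀ 0 ∈ G.VJ J := mem_biUnion.2 ⟨f₀, hf₀, G.wv_mem_faceVerts_s7 f₀ 0⟩
  obtain ⟨p⟩ := G.connected.preconnected (G.wv f₀ 0) (G.wv f₁ 0)
  obtain ⟨d, -, hd₁, hd₂⟩ := p.exists_boundary_dart (G.VJ J) hu hw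
  obtain ⟨f, hd₁f, hd₂f⟩ := G.exists_face_mem_of_adj d.adj
  exact ⟨f, fun hfJ => hd₂ (mem_biUnion.2 ⟨f, hfJ, hd₂f⟩), _, hd₁f, hd₁⟩

lemma sum_angleAt_of_subset (ω : F → ℕ → ℝ) (f : F) {S : Finset V}
    (hS : G.faceVerts f ⊆ S) :
    ∑ v ∈ S, G.angleAt ω f v = ∑ i ∈ range (G.len f), ω f i :=
  sum_fiberwise_of_maps_to (fun i _ => hS (G.wv_mem_faceVerts_s7 f i)) (ω f)

section positive

variable {G} {ω : F → ℕ → ℝ} (hω : ∀ f, ∀ i ∈ range (G.len f), 0 < ω f i)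
include hω

lemma angleAt_nonneg (f : F) (v : V) : 0 ≤ G.angleAt ω f v :=
  sum_nonneg fun i hi => (hω f i (mem_filter.1 hi).1).le

lemma angleAt_pos {f : F} {v : V} (hv : v ∈ G.faceVerts f) : 0 < G.angleAt ω f v := by
  obtain ⟨i, hi, rfl⟩ := mem_image.1 hv
  exact sum_pos' (fun j hj => (hω f j (mem_filter.1 hj).1).le)
    ⟨i, mem_filter.2 ⟨hi, rfl⟩, hω f i hi⟩

end positive

theorem hallCondition_of_angleProp (hG : G.AngleProp) : G.HallCondition := by
  rintro J hne hJ
  obtain ⟨ω, hpos, hface, hvert⟩ := hG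
  obtain ⟨f', hf'J, v', hv'f', hv'J⟩ := G.exists_face_notMem_meeting_VJ hne hJ
  have hlt : (#J : ℝ) < #(G.VJ J) := calc
    (#J : ℝ) = ∑ f ∈ J, ∑ v ∈ G.VJ J, G.angleAt ω f v := by
      rw [card_eq_sum_ones, Nat.cast_sum]
      refine sum_congr rfl fun f hf => ?_
      rw [G.sum_angleAt_of_subset ω f (S := G.VJ J) (subset_biUnion_of_mem _ hf), hface,
        Nat.cast_one]
    _ = ∑ v ∈ G.VJ J, ∑ f ∈ J, G.angleAt ω f v := sum_comm
    _ < ∑ v ∈ G.VJ J, ∑ f, G.angleAt ω f v := by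
      refine sum_lt_sum (fun v _ => sum_le_univ_sum_of_nonneg (angleAt_nonneg hpos · v))
        ⟨v', hv'J, ?_⟩
      exact sum_lt_sum_of_subset (subset_univ J) (mem_univ f') hf'J
        (angleAt_pos hpos hv'f') fun f _ _ => angleAt_nonneg hpos f v'
    _ = #(G.VJ J) := by simp [angleAt, hvert]
  exact_mod_cast hlt

lemma card_le_card_VJ (hHall : G.HallCondition) {J : Finset F} (hJ : J ≠ univ) :
    #J ≤ #(G.VJ J) := by
  rcases J.eq_empty_or_nonempty with rfl | hne
  · simp
  · exact (hHall J hne hJ).le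

theorem exists_bijective_matching (hHall : G.HallCondition) {f₀ : F} {v₀ : V}
    (hv₀ : v₀ ∈ G.faceVerts f₀) :
    ∃ σ : F → V, σ.Bijective ∧ (∀ f, σ f ∈ G.faceVerts f) ∧ σ f₀ = v₀ := by
  let t : F → Finset V := fun f => if f = f₀ then {v₀} else G.faceVerts f
  have hall : ∀ s : Finset F, #s ≤ #(s.biUnion t) := by
    intro s
    by_cases hf₀ : f₀ ∈ s
    · have hsub : G.VJ (s.erase f₀) ⊆ s.biUnion t := by
        intro v hv
        obtain ⟨f, hf, hvf⟩ := mem_biUnion.1 hv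
        exact mem_biUnion.2 ⟨f, mem_of_mem_erase hf, by simp [t, ne_of_mem_erase hf, hvf]⟩
      have hlt : #(s.erase f₀) < #(s.biUnion t) := by
        rcases (s.erase f₀).eq_empty_or_nonempty with hempty | hne
        · rw [hempty, card_empty, card_pos]
          exact ⟨v₀, mem_biUnion.2 ⟨f₀, hf₀, by simp [t]⟩⟩
        · have hJ : s.erase f₀ ≠ univ := fun h => notMem_erase f₀ s (h ▸ mem_univ f₀)
          exact (hHall _ hne hJ).trans_le (card_le_card hsub)
      rw [card_erase_of_mem hf₀] at hlt
      have := card_pos.2 ⟨f₀, hf₀⟩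
      omega
    · have hst : s.biUnion t = G.VJ s :=
        biUnion_congr rfl fun f hf => if_neg (ne_of_mem_of_not_mem hf hf₀)
      rw [hst]
      exact G.card_le_card_VJ hHall fun h => hf₀ (h ▸ mem_univ f₀)
  obtain ⟨σ, hinj, hσt⟩ := (all_card_le_biUnion_card_iff_exists_injective t).1 hall
  have hσ₀ : σ f₀ = v₀ := by simpa [t] using hσt f₀
  refine ⟨σ, (Fintype.bijective_iff_injective_and_card σ).2
    ⟨hinj, G.card_F.trans G.card_V.symm⟩, fun f => ?_, hσ₀⟩
  by_cases hf : f = f₀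
  · exact hf ▸ hσ₀ ▸ hv₀
  · simpa [t, hf] using hσt f

noncomputable def matchingAngle (σ : F → V) (f : F) (i : ℕ) : ℝ :=
  if G.wv f i = σ f then (#((range (G.len f)).filter fun j => G.wv f j = σ f) : ℝ)⁻¹ else 0

section matching

variable {G} {σ : F → V} (hσ : ∀ f, σ f ∈ G.faceVerts f)
include hσ

lemma card_filter_wv_eq_pos (f : F) :
    0 < #((range (G.len f)).filter fun j => G.wv f j = σ f) := by
  obtain ⟨i, hi, hiσ⟩ := mem_image.1 (hσ f)
  exact card_pos.2 ⟨i, mem_filter.2 ⟨hi, hiσ⟩⟩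

lemma matchingAngle_pos {f : F} {i : ℕ} (h : G.wv f i = σ f) : 0 < G.matchingAngle σ f i := by
  have := card_filter_wv_eq_pos hσ f
  rw [matchingAngle, if_pos h]
  positivity

lemma angleAt_matchingAngle (f : F) (v : V) :
    G.angleAt (G.matchingAngle σ) f v = if σ f = v then 1 else 0 := by
  by_cases h : σ f = v
  · subst h
    rw [if_pos rfl, angleAt]
    unfold matchingAngle
    rw [sum_congr rfl fun i hi => if_pos (mem_filter.1 hi).2, sum_const, nsmul_eq_mul]
    exact mul_inv_cancel₀ (Nat.cast_ne_zero.2 (card_filter_wv_eq_pos hσ f).ne')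
  · rw [if_neg h]
    exact sum_eq_zero fun i hi => if_neg ((mem_filter.1 hi).2.trans_ne (Ne.symm h))

lemma isAngleWeighting_matchingAngle (hbij : σ.Bijective) :
    G.IsAngleWeighting_s7 (G.matchingAngle σ) := by
  constructor
  · intro f
    have hsupp : ∀ i ∈ range (G.len f), G.matchingAngle σ f i ≠ 0 → G.wv f i = σ f :=
      fun i _ hi => by_contra fun h => hi (if_neg h)
    rw [← sum_filter_of_ne hsupp]
    exact (angleAt_matchingAngle hσ f (σ f)).trans (if_pos rfl)
  · intro v
    simp only [angleAt_matchingAngle hσ]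
    rw [hbij.sum_comp fun w => if w = v then (1 : ℝ) else 0, Fintype.sum_ite_eq']

end matching

lemma matchingAngle_nonneg (σ : F → V) (f : F) (i : ℕ) : 0 ≤ G.matchingAngle σ f i := by
  unfold matchingAngle
  split_ifs <;> positivity

lemma isAngleWeighting_average {ι : Type*} {s : Finset ι} (hs : s.Nonempty)
    (ω : ι → F → ℕ → ℝ) (h : ∀ c ∈ s, G.IsAngleWeighting_s7 (ω c)) :
    G.IsAngleWeighting_s7 fun f i => (∑ c ∈ s, ω c f i) / #s := by
  have hs' : (#s : ℝ) ≠ 0 := Nat.cast_ne_zero.2 hs.card_pos.ne'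
  constructor
  · intro f
    rw [← sum_div, sum_comm, sum_congr rfl fun c hc => (h c hc).1 f, sum_const, nsmul_one,
      div_self hs']
  · intro v
    have hvert : ∀ c ∈ s, ∑ f, ∑ i ∈ (range (G.len f)).filter (G.wv f · = v), ω c f i = 1 :=
      fun c hc => (h c hc).2 v
    simp only [angleAt, ← sum_div]
    rw [sum_congr rfl fun f _ => sum_comm, sum_comm, sum_congr rfl hvert, sum_const, nsmul_one,
      div_self hs']

theorem angleProp_of_hallCondition (hHall : G.HallCondition) : G.AngleProp := by
  have hmatch : ∀ c : Σ _ : F, ℕ, ∃ σ : F → V, σ.Bijective ∧ (∀ f, σ f ∈ G.faceVerts f) ∧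
      σ c.1 = G.wv c.1 c.2 :=
    fun c => G.exists_bijective_matching hHall (G.wv_mem_faceVerts_s7 c.1 c.2)
  choose σ hbij hσ hσc using hmatch
  let corners : Finset (Σ _ : F, ℕ) := univ.sigma fun f => range (G.len f)
  obtain ⟨f₀⟩ := G.nonempty_faces
  have hcorners : corners.Nonempty :=
    ⟨⟨f₀, 0⟩, mem_sigma.2 ⟨mem_univ _, mem_range.2 (G.len_pos f₀)⟩⟩
  refine ⟨fun f i => (∑ c ∈ corners, G.matchingAngle (σ c) f i) / #corners,
    fun f i hi => ?_, G.isAngleWeighting_average hcorners _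
      fun c _ => isAngleWeighting_matchingAngle (hσ c) (hbij c)⟩
  refine div_pos (sum_pos' (fun c _ => G.matchingAngle_nonneg (σ c) f i)
    ⟨⟨f, i⟩, mem_sigma.2 ⟨mem_univ _, hi⟩, matchingAngle_pos (hσ _) (hσc ⟨f, i⟩).symm⟩) ?_
  exact_mod_cast hcorners.card_pos

end TorusGraph

open TorusGraph in
/-- A connected cellularly embedded toroidal multigraph with `r` vertices, `2r`
edges and `r` faces has the Angle property if and only if the Hall condition
`|J| < |V(G(J))|` holds for every nonempty proper subset `J` of faces. -/
theorem angle_iff_hall {r : ℕ} {V E F : Type} [Fintype V] [Fintype E] [Fintype F]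
    [DecidableEq V] [DecidableEq E] [DecidableEq F]
    (G : TorusGraph r V E F) :
    G.AngleProp ↔
      ∀ J : Finset F, J.Nonempty → J ≠ Finset.univ → J.card < (G.VJ J).card :=
  ⟨G.hallCondition_of_angleProp, G.angleProp_of_hallCondition⟩
end

section
/- A system of linear equations Mx = b with the constraint x > 0 (componentwise strict) has a solution if and only if there is no vector y with y^T M ≥ 0 componentwise, y^T b ≤ 0, and at least one of these inequalities strict. -/
/-! Appending the column `-b` to `M` turns a positive solution of `M x = b` into a positive solution
of the homogeneous system `A x = 0`, and back after scaling the last coordinate to `1`. If no `y`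
has `y ᵥ* A` nonnegative and nonzero, the row space of `A` misses the standard simplex, so
Hahn–Banach separates the two by a functional bounded above on the row space. Such a functional
vanishes on the row space, and its values at the vertices of the simplex are positive: its
coefficient vector is the required solution of `A x = 0`. -/

open Matrix

theorem LinearMap.map_eq_zero_of_forall_mem_lt {𝕜 E F : Type*} [Field 𝕜] [Preorder 𝕜]
    [AddCommGroup E] [Module 𝕜 E] [FunLike F E 𝕜] [LinearMapClass F 𝕜 E 𝕜]
    {p : Submodule 𝕜 E} (f : F) {u : 𝕜} (hf : ∀ x ∈ p, f x < u) {x : E} (hx : x ∈ p) :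
    f x = 0 := by
  by_contra hfx
  have := hf ((u / f x) • x) (p.smul_mem _ hx)
  rw [map_smul, smul_eq_mul, div_mul_cancel₀ _ hfx] at this
  exact lt_irrefl u this

theorem Matrix.dotProduct_pos_of_nonneg_of_pos {R n : Type*} [Semiring R] [PartialOrder R]
    [IsStrictOrderedRing R] [Fintype n] {v w : n → R} (hv : 0 ≤ v) {j : n} (hvj : 0 < v j)
    (hw : ∀ i, 0 < w i) : 0 < v ⬝ᵥ w :=
  Finset.sum_pos' (fun i _ => mul_nonneg (hv i) (hw i).le)
    ⟨j, Finset.mem_univ j, mul_pos hvj (hw j)⟩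

theorem Submodule.exists_pos_forall_dotProduct_eq_zero {ι : Type*} [Fintype ι]
    (V : Submodule ℝ (ι → ℝ)) (hV : Disjoint (V : Set (ι → ℝ)) (stdSimplex ℝ ι)) :
    ∃ x : ι → ℝ, (∀ i, 0 < x i) ∧ ∀ v ∈ V, v ⬝ᵥ x = 0 := by
  classical
  obtain ⟨f, u, w, hfV, huw, hfΔ⟩ := geometric_hahn_banach_closed_compact V.convex
    V.closed_of_finiteDimensional (convex_stdSimplex ℝ ι) (isCompact_stdSimplex ℝ ι) hV
  have hf : ∀ v, f v = v ⬝ᵥ fun i => f (Pi.single i 1) := by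
    intro v
    conv_lhs => rw [pi_eq_sum_univ' v]
    simp [dotProduct]
  have hu : 0 < u := by simpa using hfV 0 V.zero_mem
  refine ⟨fun i => f (Pi.single i 1), fun i => ?_, fun v hv => ?_⟩
  · exact hu.trans (huw.trans (hfΔ _ (single_mem_stdSimplex ℝ i)))
  · rw [← hf]
    exact LinearMap.map_eq_zero_of_forall_mem_lt f hfV hv

theorem Matrix.exists_pos_mulVec_eq_zero {m ι : Type*} [Fintype m] [Fintype ι]
    (A : Matrix m ι ℝ) (hA : ∀ y, 0 ≤ y ᵥ* A → y ᵥ* A = 0) :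
    ∃ x : ι → ℝ, (∀ i, 0 < x i) ∧ A *ᵥ x = 0 := by
  have hdisj : Disjoint (LinearMap.range A.vecMulLinear : Set (ι → ℝ)) (stdSimplex ℝ ι) := by
    rw [Set.disjoint_left]
    rintro _ ⟨y, rfl⟩ ⟨hnonneg, hsum⟩
    simp [hA y hnonneg] at hsum
  obtain ⟨x, hx, hperp⟩ :=
    (LinearMap.range A.vecMulLinear).exists_pos_forall_dotProduct_eq_zero hdisj
  refine ⟨x, hx, dotProduct_eq_zero_iff.mp fun y => ?_⟩
  rw [dotProduct_comm, dotProduct_mulVec]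
  exact hperp _ ⟨y, rfl⟩

theorem Matrix.exists_pos_mulVec_eq {m n : Type*} [Fintype m] [Fintype n]
    (M : Matrix m n ℝ) (b : m → ℝ)
    (h : ∀ y, 0 ≤ y ᵥ* M → y ⬝ᵥ b ≤ 0 → y ᵥ* M = 0 ∧ y ⬝ᵥ b = 0) :
    ∃ x : n → ℝ, (∀ j, 0 < x j) ∧ M *ᵥ x = b := by
  set A := fromCols M (replicateCol Unit (-b))
  have hA : ∀ y, y ᵥ* A = Sum.elim (y ᵥ* M) (Function.const Unit (-(y ⬝ᵥ b))) := by
    intro y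
    simp [A, mulVec_replicateCol_eq_const]
  obtain ⟨x, hx, hAx⟩ := A.exists_pos_mulVec_eq_zero fun y hy => by
    rw [hA] at hy ⊢
    obtain ⟨hyM, hyb⟩ := h y (fun j => hy (.inl j)) (by simpa using hy (.inr ()))
    simp [hyM, hyb]
  set t := x (.inr ())
  have hMx : M *ᵥ (x ∘ Sum.inl) = t • b := by
    have hcol : replicateCol Unit (-b) *ᵥ (x ∘ Sum.inr) = -(t • b) := by
      ext i
      simp [mulVec, dotProduct, t, mul_comm]
    rwa [fromCols_mulVec, hcol, add_neg_eq_zero] at hAx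
  refine ⟨t⁻¹ • (x ∘ Sum.inl), fun j => mul_pos (inv_pos.mpr (hx _)) (hx _), ?_⟩
  rw [mulVec_smul, hMx, smul_smul, inv_mul_cancel₀ (hx _).ne', one_smul]

open Matrix in
/-- **Stiemke's theorem of the alternative.** The system `M x = b`, `x > 0`
(componentwise strict) has a solution iff there is no vector `y` with
`yᵀM ≥ 0` componentwise, `yᵀb ≤ 0`, and at least one of these inequalities
strict. -/
theorem stiemke_alternative (m n : ℕ) (M : Matrix (Fin m) (Fin n) ℝ) (b : Fin m → ℝ) :
    (∃ x : Fin n → ℝ, M.mulVec x = b ∧ ∀ j, 0 < x j) ↔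
    ¬ ∃ y : Fin m → ℝ,
        (∀ j, 0 ≤ Matrix.vecMul y M j) ∧ dotProduct y b ≤ 0 ∧
        ((∃ j, 0 < Matrix.vecMul y M j) ∨ dotProduct y b < 0) := by
  constructor
  · rintro ⟨x, rfl, hx⟩ ⟨y, hyM, hyb, hstrict⟩
    rw [dotProduct_mulVec] at hyb
    rcases hstrict with ⟨j, hj⟩ | hneg
    · exact (dotProduct_pos_of_nonneg_of_pos hyM hj hx).not_ge hyb
    · rw [dotProduct_mulVec] at hneg
      exact hneg.not_ge (dotProduct_nonneg_of_nonneg hyM fun j => (hx j).le)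
  · intro h
    obtain ⟨x, hx, hMx⟩ := M.exists_pos_mulVec_eq b fun y hyM hyb => by
      by_contra hne
      refine h ⟨y, hyM, hyb, ?_⟩
      rcases not_and_or.mp hne with hyM' | hyb'
      · obtain ⟨j, hj⟩ := Function.ne_iff.mp hyM'
        exact .inl ⟨j, (hyM j).lt_of_ne' hj⟩
      · exact .inr (hyb.lt_of_ne hyb')
    exact ⟨x, hMx, hx⟩
end

section
/- If a cellularly embedded toroidal graph G with r vertices, 2r edges and r faces has the Angle property, then for every nonempty proper subset J of faces, the following two inequalities are equivalent to each other: |Int G(J)| < |J| and |J| < |V(G(J))|; that is, for such G, one of the two Hall-type inequalities implies the other. -/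
/- With the Angle weights, a vertex receives from the faces of `J` a total mass in `(0, 1]`,
equal to `1` exactly at interior vertices, and the masses on `V(G(J))` add up to `|J|`.
Hence `|J| = |Int G(J)| + (mass on the boundary vertices)`, and both inequalities say that
there is a boundary vertex. -/

theorem Finset.card_lt_iff_lt_card_of_sum_eq {α : Type*} [DecidableEq α] {I S : Finset α}
    {t : α → ℝ} {n : ℕ} (hIS : I ⊆ S) (hI : ∀ v ∈ I, t v = 1)
    (hpos : ∀ v ∈ S \ I, 0 < t v) (hlt : ∀ v ∈ S \ I, t v < 1)
    (hsum : ∑ v ∈ S, t v = n) : I.card < n ↔ n < S.card := by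
  have hsplit : (n : ℝ) = I.card + ∑ v ∈ S \ I, t v := by
    rw [← hsum, ← Finset.sum_sdiff hIS, Finset.sum_congr rfl hI, Finset.sum_const,
      nsmul_one, add_comm]
  have hcard : (S.card : ℝ) = I.card + (S \ I).card := by
    rw [← Finset.card_sdiff_add_card_eq_card hIS]
    push_cast
    ring
  rcases (S \ I).eq_empty_or_nonempty with hB | hB
  · rw [hB, Finset.sum_empty, add_zero] at hsplit
    rw [hB, Finset.card_empty, Nat.cast_zero, add_zero] at hcard
    have : n = I.card := by exact_mod_cast hsplit
    have : S.card = I.card := by exact_mod_cast hcard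
    omega
  · have hB_pos : 0 < ∑ v ∈ S \ I, t v := Finset.sum_pos hpos hB
    have hB_lt : ∑ v ∈ S \ I, t v < (S \ I).card := by
      simpa using Finset.sum_lt_sum_of_nonempty hB hlt
    have h₁ : (I.card : ℝ) < n := by linarith
    have h₂ : (n : ℝ) < S.card := by linarith
    exact ⟨fun _ => by exact_mod_cast h₂, fun _ => by exact_mod_cast h₁⟩

namespace TorusGraph

variable {r : ℕ} {V E F : Type} [Fintype V] [Fintype E] [Fintype F]
    [DecidableEq V] [DecidableEq E] [DecidableEq F]
    (G : TorusGraph r V E F) (ω : F → ℕ → ℝ)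

def cornerWeight (f : F) (v : V) : ℝ :=
  ∑ i ∈ (Finset.range (G.len f)).filter (fun i => G.wv f i = v), ω f i

def massFrom (J : Finset F) (v : V) : ℝ :=
  ∑ f ∈ J, G.cornerWeight ω f v

variable {G ω}

section Positive

variable (hpos : ∀ f, ∀ i ∈ Finset.range (G.len f), 0 < ω f i)
include hpos

theorem cornerWeight_nonneg (f : F) (v : V) : 0 ≤ G.cornerWeight ω f v :=
  Finset.sum_nonneg fun i hi => (hpos f i (Finset.mem_filter.mp hi).1).le

theorem cornerWeight_pos {f : F} {v : V} (hv : v ∈ G.faceVerts f) :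
    0 < G.cornerWeight ω f v := by
  obtain ⟨i, hi, rfl⟩ := Finset.mem_image.mp hv
  exact Finset.sum_pos' (fun j hj => (hpos f j (Finset.mem_filter.mp hj).1).le)
    ⟨i, Finset.mem_filter.mpr ⟨hi, rfl⟩, hpos f i hi⟩

theorem massFrom_pos {J : Finset F} {v : V} (hv : v ∈ G.VJ J) : 0 < G.massFrom ω J v := by
  obtain ⟨f, hf, hvf⟩ := Finset.mem_biUnion.mp hv
  exact Finset.sum_pos' (fun g _ => cornerWeight_nonneg hpos g v)
    ⟨f, hf, cornerWeight_pos hpos hvf⟩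

theorem massFrom_lt_one (hvert : ∀ v, G.massFrom ω Finset.univ v = 1) {J : Finset F} {v : V}
    (hv : v ∈ G.VJ J \ G.IntJ J) : G.massFrom ω J v < 1 := by
  obtain ⟨hvJ, hvInt⟩ := Finset.mem_sdiff.mp hv
  obtain ⟨f, hvf, hfJ⟩ : ∃ f, v ∈ G.faceVerts f ∧ f ∉ J := by
    by_contra! h
    exact hvInt (Finset.mem_filter.mpr ⟨hvJ, h⟩)
  have hle : G.massFrom ω (insert f J) v ≤ G.massFrom ω Finset.univ v :=
    Finset.sum_le_sum_of_subset_of_nonneg (Finset.subset_univ _)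
      fun g _ _ => cornerWeight_nonneg hpos g v
  rw [massFrom, Finset.sum_insert hfJ, ← massFrom, hvert] at hle
  linarith [cornerWeight_pos hpos hvf]

end Positive

theorem massFrom_eq_univ_of_mem_IntJ {J : Finset F} {v : V} (hv : v ∈ G.IntJ J) :
    G.massFrom ω J v = G.massFrom ω Finset.univ v := by
  refine Finset.sum_subset (Finset.subset_univ J) fun f _ hfJ => Finset.sum_eq_zero ?_
  intro i hi
  obtain ⟨hi_range, rfl⟩ := Finset.mem_filter.mp hi
  exact absurd ((Finset.mem_filter.mp hv).2 f (Finset.mem_image_of_mem _ hi_range)) hfJ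

theorem sum_massFrom_VJ (hface : ∀ f, ∑ i ∈ Finset.range (G.len f), ω f i = 1)
    (J : Finset F) : ∑ v ∈ G.VJ J, G.massFrom ω J v = J.card := by
  unfold massFrom cornerWeight
  rw [Finset.sum_comm, Finset.card_eq_sum_ones, Nat.cast_sum, Nat.cast_one]
  refine Finset.sum_congr rfl fun f hf => ?_
  have hmaps : ∀ i ∈ Finset.range (G.len f), G.wv f i ∈ G.VJ J := fun i hi =>
    Finset.mem_biUnion.mpr ⟨f, hf, Finset.mem_image_of_mem _ hi⟩
  rw [Finset.sum_fiberwise_of_maps_to hmaps]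
  exact hface f

end TorusGraph

open TorusGraph in
/-- If a cellularly embedded toroidal graph with `r` vertices and `2r` edges has
the Angle property, then for every nonempty proper subset `J` of faces the two
Hall-type inequalities `|Int G(J)| < |J|` and `|J| < |V(G(J))|` are equivalent. -/
theorem hall_inequalities_equivalent {r : ℕ} {V E F : Type}
    [Fintype V] [Fintype E] [Fintype F]
    [DecidableEq V] [DecidableEq E] [DecidableEq F]
    (G : TorusGraph r V E F) (hA : G.AngleProp) :
    ∀ J : Finset F, J.Nonempty → J ≠ Finset.univ →
      ((G.IntJ J).card < J.card ↔ J.card < (G.VJ J).card) := by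
  obtain ⟨ω, hpos, hface, hvert⟩ := hA
  intro J _ _
  exact Finset.card_lt_iff_lt_card_of_sum_eq (Finset.filter_subset _ _)
    (fun v hv => (massFrom_eq_univ_of_mem_IntJ hv).trans (hvert v))
    (fun v hv => massFrom_pos hpos (Finset.mem_sdiff.mp hv).1)
    (fun v hv => massFrom_lt_one hpos hvert hv) (sum_massFrom_VJ hface J)
end
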